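/- Fix a > 0. (1) If w ∈ B_a, then T^me_a(w) ∈ M_a; if moreover w ∈ B*_a, then T^me_a(w) ∈ M*_a, the unique maximizer of T^me_a(w) is a, T^me_a(w)(a) = 2 w(ρ(w)), inf{s ∈ [0,a] : T^me_a(w)(s) = T^me_a(w)(a)/2} = ρ(w), and T^br_a(T^me_a(w)) = w. (2) If w ∈ M_a, then T^br_a(w) ∈ B_a; if moreover w ∈ M*_a, then T^br_a(w) ∈ B*_a, the unique maximizer of T^br_a(w) is γ := inf{s ∈ [0,a] : w(s) = w(a)/2}, T^br_a(w)(γ) = w(a)/2, and T^me_a(T^br_a(w)) = w. -/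

import Mathlib

open Set Filter MeasureTheory Topology UniformConvergence

noncomputable section

/-- Supremum of `f` over the interval `[s,t]`. -/
def maxOn' (f : ℝ → ℝ) (s t : ℝ) : ℝ := sSup (f '' Set.Icc s t)

/-- Infimum of `f` over the interval `[s,t]`. -/
def minOn' (f : ℝ → ℝ) (s t : ℝ) : ℝ := sInf (f '' Set.Icc s t)

/-- `ρ(w)`: the first time in `[0,a]` at which `f` attains its maximum over `[0,a]`. -/
def rho (a : ℝ) (f : ℝ → ℝ) : ℝ := sInf {s | s ∈ Set.Icc 0 a ∧ f s = maxOn' f 0 a}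

/-- membership in `B_a`: continuous bridges of length `a`. -/
def IsBridge (a : ℝ) (f : ℝ → ℝ) : Prop :=
  ContinuousOn f (Set.Icc 0 a) ∧ f 0 = 0 ∧ f a = 0

/-- membership in `B*_a`: bridges whose maximum is attained at a unique point. -/
def IsBridgeStar (a : ℝ) (f : ℝ → ℝ) : Prop :=
  IsBridge a f ∧ ∃! s, s ∈ Set.Icc 0 a ∧ ∀ u ∈ Set.Icc 0 a, f u ≤ f s

/-- membership in `M_a`. -/
def IsMeander (a : ℝ) (f : ℝ → ℝ) : Prop :=
  ContinuousOn f (Set.Icc 0 a) ∧ f 0 = 0 ∧ ∀ s ∈ Set.Icc 0 a, f s ≤ f a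

/-- membership in `M*_a`. -/
def IsMeanderStar (a : ℝ) (f : ℝ → ℝ) : Prop :=
  ContinuousOn f (Set.Icc 0 a) ∧ f 0 = 0 ∧ rho a f = a

/-- The transformation `T^me_a`. -/
def Tme (a : ℝ) (f : ℝ → ℝ) : ℝ → ℝ := fun t =>
  if t ≤ rho a f then f t else f (rho a f) + f (a + rho a f - t)

/-- `γ_{f(a)/2}`: the first time in `[0,a]` at which `f` hits the level `f(a)/2`. -/
def gammaHalf (a : ℝ) (f : ℝ → ℝ) : ℝ := sInf {s | s ∈ Set.Icc 0 a ∧ f s = f a / 2}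

/-- The transformation `T^br_a`. -/
def Tbr (a : ℝ) (f : ℝ → ℝ) : ℝ → ℝ := fun t =>
  if t ≤ gammaHalf a f then f t else f (a + gammaHalf a f - t) - f (gammaHalf a f)

/-- The Brownian scaling map `S_b`. -/
def scaleMap (b : ℝ) (f : ℝ → ℝ) : ℝ → ℝ := fun t => (Real.sqrt b)⁻¹ * f (b * t)

/-- `m^br_t(w)` (for bridges of length `1`). -/
def mbr (f : ℝ → ℝ) (t : ℝ) : ℝ := if t ≤ rho 1 f then maxOn' f 0 t else maxOn' f t 1

/-- `g^br_t(w)`: left endpoint of the excursion of `m^br(w) - w` straddling `t`. -/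
def gbr (f : ℝ → ℝ) (t : ℝ) : ℝ := sSup {s | s ∈ Set.Icc 0 t ∧ mbr f s - f s = 0}

/-- `d^br_t(w)`: right endpoint of the excursion of `m^br(w) - w` straddling `t`,
with the convention `d^br_1(w) = 1`. -/
def dbr (f : ℝ → ℝ) (t : ℝ) : ℝ :=
  if t = 1 then 1 else sInf {s | s ∈ Set.Ioc t 1 ∧ mbr f s - f s = 0}

/-- `r^br_t(w)`: maximum of `m^br(w) - w` over the excursion interval. -/
def rbr (f : ℝ → ℝ) (t : ℝ) : ℝ :=
  sSup ((fun s => mbr f s - f s) '' Set.Icc (gbr f t) (dbr f t))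

/-- `u^br_t(w)`: Lebesgue time spent, up to time `t`, in non-excised excursions. -/
def ubr (f : ℝ → ℝ) (t : ℝ) : ℝ := ∫ s in (0:ℝ)..t, if rbr f s < mbr f s then (1:ℝ) else 0

/-- `α^br_s(w)`, with the convention `α^br_{u^br_1(w)}(w) = 1`. -/
def abr (f : ℝ → ℝ) (s : ℝ) : ℝ :=
  if s = ubr f 1 then 1 else sInf {t | t ∈ Set.Icc (0:ℝ) 1 ∧ s < ubr f t}

/-- `H^br(w)` (as a function; it is relevant on `[0, u^br_1(w)]`). -/
def Hbr (f : ℝ → ℝ) : ℝ → ℝ := fun t => f (abr f t)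

/-- `G^br(w)`. -/
def Gbr (f : ℝ → ℝ) : ℝ → ℝ := if 0 < ubr f 1 then scaleMap (ubr f 1) (Hbr f) else 0

/-- the past-maximum function `w̄`. -/
def pastMax (f : ℝ → ℝ) (t : ℝ) : ℝ := maxOn' f 0 t

/-- `g^me_t(w)`. -/
def gme (f : ℝ → ℝ) (t : ℝ) : ℝ := sSup {s | s ∈ Set.Icc 0 t ∧ pastMax f s - f s = 0}

/-- `d^me_t(w)`, with the convention `d^me_1(w) = 1`. -/
def dme (f : ℝ → ℝ) (t : ℝ) : ℝ :=
  if t = 1 then 1 else sInf {s | s ∈ Set.Ioc t 1 ∧ pastMax f s - f s = 0}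

/-- `r^me_t(w)`. -/
def rme (f : ℝ → ℝ) (t : ℝ) : ℝ :=
  sSup ((fun s => pastMax f s - f s) '' Set.Icc (gme f t) (dme f t))

/-- `u^me_t(w)`. -/
def ume (f : ℝ → ℝ) (t : ℝ) : ℝ :=
  if t ≤ gammaHalf 1 f then ∫ s in (0:ℝ)..t, if rme f s < pastMax f s then (1:ℝ) else 0
  else (∫ s in (0:ℝ)..gammaHalf 1 f, if rme f s < pastMax f s then (1:ℝ) else 0) +
    ∫ s in gammaHalf 1 f..t, if rme f s < pastMax f s - f 1 / 2 then (1:ℝ) else 0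

/-- `α^me_s(w)`, with the convention `α^me_{u^me_1(w)}(w) = 1`. -/
def ame (f : ℝ → ℝ) (s : ℝ) : ℝ :=
  if s = ume f 1 then 1 else sInf {t | t ∈ Set.Icc (0:ℝ) 1 ∧ s < ume f t}

/-- `H^me(w)`. -/
def Hme (f : ℝ → ℝ) : ℝ → ℝ := fun t => f (ame f t)

/-- `G^me(w)`. -/
def Gme (f : ℝ → ℝ) : ℝ → ℝ := if 0 < ume f 1 then scaleMap (ume f 1) (Hme f) else 0

/-- Regularity property (i): uniqueness of one-sided maximizers at rational times. -/
def UniqueOneSidedMax (f : ℝ → ℝ) : Prop :=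
  ∀ t : ℚ, (t : ℝ) ∈ Set.Icc (0:ℝ) 1 →
    (∃! s, s ∈ Set.Icc (0:ℝ) (t:ℝ) ∧ ∀ u ∈ Set.Icc (0:ℝ) (t:ℝ), f u ≤ f s) ∧
    (∃! s, s ∈ Set.Icc ((t:ℝ)) 1 ∧ ∀ u ∈ Set.Icc ((t:ℝ)) 1, f u ≤ f s)

/-- Regularity property (ii): the level `0` is not a strict local minimum of `f` on `[0,1]`. -/
def NoStrictLocalMinAtZero (f : ℝ → ℝ) : Prop :=
  ¬ ∃ t ∈ Set.Icc (0:ℝ) 1, f t = 0 ∧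
      ∃ δ > 0, ∀ s ∈ Set.Icc (0:ℝ) 1, s ≠ t → |s - t| < δ → f t < f s

/-- `w ∈ B^reg_1`. -/
def Regular (f : ℝ → ℝ) : Prop :=
  IsBridge 1 f ∧ UniqueOneSidedMax f ∧ NoStrictLocalMinAtZero f

/-!
Both transformations keep a path up to a cut time `c` and replace the rest by its time reversal,
shifted so that the two pieces join continuously at `c`. For `T^me_a` the cut is the first maximum
`ρ`, and the reversed tail `w(ρ) + w(a + ρ - ·)` climbs from `w(ρ)` to `2 w(ρ)`; for `T^br_a` it is
the first hitting time `γ` of `w(a)/2`, and the reversed tail descends from `w(a)/2` to `0`.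
Cutting twice at the same time with opposite shifts is the identity, so the two maps invert each
other once the cut time of the image is shown to be that of the original path. In the starred cases
all the maxima involved are strict, and a strict maximum pins down both the first maximum and the
first hitting time of the half-maximum.
-/

def IsStrictMaxOn {α β : Type*} [Preorder β] (g : α → β) (S : Set α) (x : α) : Prop :=
  ∀ u ∈ S, u ≠ x → g u < g x

namespace IsStrictMaxOn

variable {α β : Type*} [Preorder β] {g : α → β} {S : Set α} {x u : α}

theorem le (h : IsStrictMaxOn g S x) (hu : u ∈ S) : g u ≤ g x := by
  rcases eq_or_ne u x with rfl | hne
  · exact le_rfl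
  · exact (h u hu hne).le

theorem eq_of_le (h : IsStrictMaxOn g S x) (hx : x ∈ S) (hu : u ∈ S)
    (hmax : ∀ v ∈ S, g v ≤ g u) : u = x :=
  by_contra fun hne => (h u hu hne).not_ge (hmax x hx)

theorem existsUnique (h : IsStrictMaxOn g S x) (hx : x ∈ S) :
    ∃! s, s ∈ S ∧ ∀ u ∈ S, g u ≤ g s :=
  ⟨x, ⟨hx, fun _ hu => h.le hu⟩, fun _ hs => h.eq_of_le hx hs.1 hs.2⟩

end IsStrictMaxOn

theorem isStrictMaxOn_of_existsUnique {α β : Type*} [PartialOrder β] {g : α → β} {S : Set α}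
    {x : α} (huniq : ∃! s, s ∈ S ∧ ∀ u ∈ S, g u ≤ g s) (hx : x ∈ S)
    (hmax : ∀ u ∈ S, g u ≤ g x) : IsStrictMaxOn g S x := fun u hu hne =>
  (hmax u hu).lt_of_ne fun heq => hne (huniq.unique ⟨hu, fun v hv => heq ▸ hmax v hv⟩ ⟨hx, hmax⟩)

section FirstTimes

variable {a : ℝ} {f : ℝ → ℝ}

theorem maxOn'_eq {s t x : ℝ} (hx : x ∈ Icc s t) (hmax : ∀ u ∈ Icc s t, f u ≤ f x) :
    maxOn' f s t = f x :=
  IsGreatest.csSup_eq ⟨⟨x, hx, rfl⟩, by rintro _ ⟨u, hu, rfl⟩; exact hmax u hu⟩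

theorem isLeast_sInf_levelSet_Icc {y : ℝ} (hf : ContinuousOn f (Icc 0 a))
    (hne : ∃ s ∈ Icc 0 a, f s = y) :
    IsLeast {s | s ∈ Icc 0 a ∧ f s = y} (sInf {s | s ∈ Icc 0 a ∧ f s = y}) :=
  (hf.preimage_isClosed_of_isClosed isClosed_Icc isClosed_singleton).isLeast_csInf hne
    ⟨0, fun _ hs => hs.1.1⟩

theorem rho_spec (ha : 0 ≤ a) (hf : ContinuousOn f (Icc 0 a)) :
    rho a f ∈ Icc 0 a ∧ (∀ u ∈ Icc 0 a, f u ≤ f (rho a f)) ∧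
      ∀ u ∈ Icc 0 a, u < rho a f → f u < f (rho a f) := by
  obtain ⟨s, hs, hmax⟩ := isCompact_Icc.exists_isMaxOn (nonempty_Icc.mpr ha) hf
  have hM : maxOn' f 0 a = f s := maxOn'_eq hs fun u hu => isMaxOn_iff.mp hmax u hu
  obtain ⟨⟨hρ, hfρ⟩, hfirst⟩ : IsLeast {s | s ∈ Icc 0 a ∧ f s = maxOn' f 0 a} (rho a f) :=
    isLeast_sInf_levelSet_Icc hf ⟨s, hs, hM.symm⟩
  rw [hM] at hfρ
  have hle : ∀ u ∈ Icc 0 a, f u ≤ f (rho a f) := fun u hu => hfρ ▸ isMaxOn_iff.mp hmax u hu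
  refine ⟨hρ, hle, fun u hu hlt => (hle u hu).lt_of_ne fun heq => ?_⟩
  exact hlt.not_ge (hfirst ⟨hu, hM ▸ hfρ ▸ heq⟩)

theorem rho_eq_of_isStrictMaxOn {s : ℝ} (hs : s ∈ Icc 0 a) (h : IsStrictMaxOn f (Icc 0 a) s) :
    rho a f = s := by
  have hM : maxOn' f 0 a = f s := maxOn'_eq hs fun u hu => h.le hu
  refine IsLeast.csInf_eq ⟨⟨hs, hM.symm⟩, fun u hu => ?_⟩
  exact (h.eq_of_le hs hu.1 fun v hv => hu.2 ▸ hM ▸ h.le hv).ge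

theorem gammaHalf_spec (ha : 0 ≤ a) (hf : ContinuousOn f (Icc 0 a)) (h0 : f 0 = 0)
    (hfa : 0 ≤ f a) :
    gammaHalf a f ∈ Icc 0 a ∧ f (gammaHalf a f) = f a / 2 ∧
      ∀ u ∈ Icc 0 a, u < gammaHalf a f → f u < f a / 2 := by
  obtain ⟨s, hs, hfs⟩ := intermediate_value_Icc ha hf
    (show f a / 2 ∈ Icc (f 0) (f a) by constructor <;> linarith)
  obtain ⟨⟨hγ, hfγ⟩, hfirst⟩ : IsLeast {s | s ∈ Icc 0 a ∧ f s = f a / 2} (gammaHalf a f) :=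
    isLeast_sInf_levelSet_Icc hf ⟨s, hs, hfs⟩
  refine ⟨hγ, hfγ, fun u hu hlt => lt_of_not_ge fun hge => hlt.not_ge ?_⟩
  -- an earlier crossing of the level `f a / 2` would precede `γ`
  obtain ⟨v, hv, hfv⟩ := intermediate_value_Icc hu.1 (hf.mono (Icc_subset_Icc le_rfl hu.2))
    (show f a / 2 ∈ Icc (f 0) (f u) by constructor <;> linarith)
  exact (hfirst ⟨⟨hv.1, hv.2.trans hu.2⟩, hfv⟩).trans hv.2

theorem gammaHalf_eq {s : ℝ} (hs : s ∈ Icc 0 a) (hfs : f s = f a / 2)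
    (hlt : ∀ u ∈ Icc 0 a, u < s → f u < f a / 2) : gammaHalf a f = s :=
  IsLeast.csInf_eq ⟨⟨hs, hfs⟩, fun u hu => le_of_not_gt fun hus => (hlt u hu.1 hus).ne hu.2⟩

end FirstTimes

def cutReverse (a c A : ℝ) (f : ℝ → ℝ) (t : ℝ) : ℝ :=
  if t ≤ c then f t else A + f (a + c - t)

section CutReverse

variable {a c A : ℝ} {f : ℝ → ℝ} {t : ℝ}

theorem cutReverse_of_le (h : t ≤ c) : cutReverse a c A f t = f t := if_pos h

theorem cutReverse_of_lt (h : c < t) : cutReverse a c A f t = A + f (a + c - t) :=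
  if_neg h.not_ge

theorem add_sub_mem_Icc (ht : t ∈ Icc c a) : a + c - t ∈ Icc c a :=
  ⟨by linarith [ht.2], by linarith [ht.1]⟩

theorem cutReverse_right (hc : c ≤ a) (hA : f c = A + f a) :
    cutReverse a c A f a = A + f c := by
  rcases hc.lt_or_eq with hlt | rfl
  · rw [cutReverse_of_lt hlt, add_sub_cancel_left]
  · rw [cutReverse_of_le le_rfl]
    linarith

theorem continuousOn_cutReverse (hc : c ∈ Icc 0 a) (hf : ContinuousOn f (Icc 0 a))
    (hA : f c = A + f a) : ContinuousOn (cutReverse a c A f) (Icc 0 a) := by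
  -- clamping `t` to `[0, c]` and to `[c, a]` writes both branches as one continuous formula
  have hclamp : ContinuousOn (fun t => f (min t c) + f (a + c - max t c) - f a) (Icc 0 a) := by
    refine ((hf.comp (continuous_id.min continuous_const).continuousOn fun t ht => ?_).add
      (hf.comp (continuous_const.sub (continuous_id.max continuous_const)).continuousOn
        fun t ht => ?_)).sub continuousOn_const
    · exact ⟨le_min ht.1 hc.1, (min_le_left _ _).trans ht.2⟩
    · exact Icc_subset_Icc hc.1 le_rfl
        (add_sub_mem_Icc ⟨le_max_right _ _, max_le ht.2 hc.2⟩)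
  refine hclamp.congr fun t _ => ?_
  dsimp only
  rcases le_or_gt t c with h | h
  · rw [cutReverse_of_le h, min_eq_left h, max_eq_right h, add_sub_cancel_right]
    ring
  · rw [cutReverse_of_lt h, min_eq_right h.le, max_eq_left h.le, hA]
    ring

theorem cutReverse_cutReverse {B : ℝ} (hAB : A + B = 0) (hA : f c = A + f a) (ht : t ≤ a) :
    cutReverse a c B (cutReverse a c A f) t = f t := by
  rcases le_or_gt t c with htc | htc
  · rw [cutReverse_of_le htc, cutReverse_of_le htc]
  rw [cutReverse_of_lt htc]
  rcases le_or_gt (a + c - t) c with h | h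
  · obtain rfl : t = a := le_antisymm ht (by linarith)
    rw [cutReverse_of_le h, add_sub_cancel_left, hA]
    linarith
  · rw [cutReverse_of_lt h, sub_sub_cancel]
    linarith

end CutReverse

theorem Tme_eq_cutReverse (a : ℝ) (f : ℝ → ℝ) :
    Tme a f = cutReverse a (rho a f) (f (rho a f)) f :=
  rfl

theorem Tbr_eq_cutReverse (a : ℝ) (f : ℝ → ℝ) :
    Tbr a f = cutReverse a (gammaHalf a f) (-f (gammaHalf a f)) f :=
  funext fun t => by
    unfold Tbr cutReverse
    split_ifs <;> ring

section Bridge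

variable {a : ℝ} {f : ℝ → ℝ}

theorem Tme_right (ha : 0 ≤ a) (hf : IsBridge a f) : Tme a f a = 2 * f (rho a f) := by
  obtain ⟨hρ, -, -⟩ := rho_spec ha hf.1
  rw [Tme_eq_cutReverse, cutReverse_right hρ.2 (by rw [hf.2.2, add_zero])]
  ring

theorem Tme_le_Tme_right (ha : 0 ≤ a) (hf : IsBridge a f) :
    ∀ u ∈ Icc 0 a, Tme a f u ≤ Tme a f a := by
  obtain ⟨hρ, hmax, -⟩ := rho_spec ha hf.1
  have hM : 0 ≤ f (rho a f) := hf.2.1 ▸ hmax 0 ⟨le_rfl, ha⟩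
  intro u hu
  rw [Tme_right ha hf, Tme_eq_cutReverse]
  rcases le_or_gt u (rho a f) with h | h
  · rw [cutReverse_of_le h]
    linarith [hmax u hu]
  · rw [cutReverse_of_lt h]
    linarith [hmax _ (Icc_subset_Icc hρ.1 le_rfl (add_sub_mem_Icc ⟨h.le, hu.2⟩))]

theorem isMeander_Tme (ha : 0 ≤ a) (hf : IsBridge a f) : IsMeander a (Tme a f) := by
  obtain ⟨hρ, -, -⟩ := rho_spec ha hf.1
  refine ⟨continuousOn_cutReverse hρ hf.1 (by rw [hf.2.2, add_zero]), ?_,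
    Tme_le_Tme_right ha hf⟩
  rw [Tme_eq_cutReverse, cutReverse_of_le hρ.1, hf.2.1]

theorem IsBridgeStar.isStrictMaxOn_rho (ha : 0 ≤ a) (hf : IsBridgeStar a f) :
    IsStrictMaxOn f (Icc 0 a) (rho a f) :=
  have hρ := rho_spec ha hf.1.1
  isStrictMaxOn_of_existsUnique hf.2 hρ.1 hρ.2.1

theorem IsBridgeStar.isStrictMaxOn_Tme (ha : 0 < a) (hf : IsBridgeStar a f) :
    IsStrictMaxOn (Tme a f) (Icc 0 a) a := by
  obtain ⟨hρ, -, -⟩ := rho_spec ha.le hf.1.1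
  have hstrict := hf.isStrictMaxOn_rho ha.le
  -- the maximum is positive, since `ρ` differs from `0` or from `a`, where the bridge vanishes
  have hM : 0 < f (rho a f) := by
    rcases eq_or_ne 0 (rho a f) with h | h
    · exact hf.1.2.2 ▸ hstrict a ⟨ha.le, le_rfl⟩ (h ▸ ha.ne')
    · exact hf.1.2.1 ▸ hstrict 0 ⟨le_rfl, ha.le⟩ h
  intro u hu hua
  rw [Tme_right ha.le hf.1, Tme_eq_cutReverse]
  rcases le_or_gt u (rho a f) with h | h
  · rw [cutReverse_of_le h]
    linarith [hstrict.le hu]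
  · rw [cutReverse_of_lt h]
    have hmem := Icc_subset_Icc hρ.1 le_rfl (add_sub_mem_Icc ⟨h.le, hu.2⟩)
    linarith [hstrict _ hmem fun heq => hua (by linarith)]

theorem IsBridgeStar.isMeanderStar_Tme (ha : 0 < a) (hf : IsBridgeStar a f) :
    IsMeanderStar a (Tme a f) :=
  have hme := isMeander_Tme ha.le hf.1
  ⟨hme.1, hme.2.1, rho_eq_of_isStrictMaxOn ⟨ha.le, le_rfl⟩ (hf.isStrictMaxOn_Tme ha)⟩

theorem IsBridgeStar.gammaHalf_Tme (ha : 0 ≤ a) (hf : IsBridgeStar a f) :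
    gammaHalf a (Tme a f) = rho a f := by
  obtain ⟨hρ, -, hfirst⟩ := rho_spec ha hf.1.1
  have hTρ : Tme a f (rho a f) = f (rho a f) := cutReverse_of_le le_rfl
  refine gammaHalf_eq hρ (by rw [hTρ, Tme_right ha hf.1]; ring) fun u hu hlt => ?_
  rw [Tme_right ha hf.1, Tme_eq_cutReverse, cutReverse_of_le hlt.le]
  linarith [hfirst u hu hlt]

theorem IsBridgeStar.Tbr_Tme (ha : 0 ≤ a) (hf : IsBridgeStar a f) :
    ∀ t ∈ Icc 0 a, Tbr a (Tme a f) t = f t := fun t ht => by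
  have hTρ : Tme a f (rho a f) = f (rho a f) := cutReverse_of_le le_rfl
  rw [Tbr_eq_cutReverse, hf.gammaHalf_Tme ha, hTρ, Tme_eq_cutReverse]
  exact cutReverse_cutReverse (add_neg_cancel _) (by rw [hf.1.2.2, add_zero]) ht.2

end Bridge

section Meander

variable {a : ℝ} {f : ℝ → ℝ}

theorem IsMeander.nonneg_right (ha : 0 ≤ a) (hf : IsMeander a f) : 0 ≤ f a :=
  hf.2.1 ▸ hf.2.2 0 ⟨le_rfl, ha⟩

theorem IsMeander.gammaHalf_spec (ha : 0 ≤ a) (hf : IsMeander a f) :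
    gammaHalf a f ∈ Icc 0 a ∧ f (gammaHalf a f) = f a / 2 ∧
      ∀ u ∈ Icc 0 a, u < gammaHalf a f → f u < f a / 2 :=
  _root_.gammaHalf_spec ha hf.1 hf.2.1 (hf.nonneg_right ha)

theorem isBridge_Tbr (ha : 0 ≤ a) (hf : IsMeander a f) : IsBridge a (Tbr a f) := by
  obtain ⟨hγ, hfγ, -⟩ := hf.gammaHalf_spec ha
  have hA : f (gammaHalf a f) = -f (gammaHalf a f) + f a := by linarith
  rw [Tbr_eq_cutReverse]
  refine ⟨continuousOn_cutReverse hγ hf.1 hA, ?_, ?_⟩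
  · rw [cutReverse_of_le hγ.1, hf.2.1]
  · rw [cutReverse_right hγ.2 hA, neg_add_cancel]

theorem IsMeanderStar.isStrictMaxOn (ha : 0 ≤ a) (hf : IsMeanderStar a f) :
    IsStrictMaxOn f (Icc 0 a) a := fun u hu hne => by
  obtain ⟨-, -, hfirst⟩ := rho_spec ha hf.1
  rw [hf.2.2] at hfirst
  exact hfirst u hu (hu.2.lt_of_ne hne)

theorem IsMeanderStar.isMeander (ha : 0 ≤ a) (hf : IsMeanderStar a f) : IsMeander a f :=
  ⟨hf.1, hf.2.1, fun _ hu => (hf.isStrictMaxOn ha).le hu⟩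

theorem IsMeanderStar.Tbr_gammaHalf (ha : 0 ≤ a) (hf : IsMeanderStar a f) :
    Tbr a f (gammaHalf a f) = f a / 2 := by
  rw [Tbr_eq_cutReverse, cutReverse_of_le le_rfl]
  exact ((hf.isMeander ha).gammaHalf_spec ha).2.1

theorem IsMeanderStar.isStrictMaxOn_Tbr (ha : 0 ≤ a) (hf : IsMeanderStar a f) :
    IsStrictMaxOn (Tbr a f) (Icc 0 a) (gammaHalf a f) := by
  obtain ⟨hγ, hfγ, hfirst⟩ := (hf.isMeander ha).gammaHalf_spec ha
  intro u hu hne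
  rw [hf.Tbr_gammaHalf ha, Tbr_eq_cutReverse]
  rcases lt_or_gt_of_ne hne with h | h
  · rw [cutReverse_of_le h.le]
    exact hfirst u hu h
  · rw [cutReverse_of_lt h]
    have hmem := Icc_subset_Icc hγ.1 le_rfl (add_sub_mem_Icc ⟨h.le, hu.2⟩)
    linarith [hf.isStrictMaxOn ha _ hmem fun heq => hne (by linarith)]

theorem IsMeanderStar.isBridgeStar_Tbr (ha : 0 ≤ a) (hf : IsMeanderStar a f) :
    IsBridgeStar a (Tbr a f) :=
  ⟨isBridge_Tbr ha (hf.isMeander ha), (hf.isStrictMaxOn_Tbr ha).existsUnique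
    ((hf.isMeander ha).gammaHalf_spec ha).1⟩

theorem IsMeanderStar.Tme_Tbr (ha : 0 ≤ a) (hf : IsMeanderStar a f) :
    ∀ t ∈ Icc 0 a, Tme a (Tbr a f) t = f t := fun t ht => by
  obtain ⟨hγ, hfγ, -⟩ := (hf.isMeander ha).gammaHalf_spec ha
  have hρ : rho a (Tbr a f) = gammaHalf a f := rho_eq_of_isStrictMaxOn hγ (hf.isStrictMaxOn_Tbr ha)
  have hTγ : Tbr a f (gammaHalf a f) = f (gammaHalf a f) := hf.Tbr_gammaHalf ha ▸ hfγ.symm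
  rw [Tme_eq_cutReverse, hρ, hTγ, Tbr_eq_cutReverse]
  exact cutReverse_cutReverse (neg_add_cancel _) (by linarith) ht.2

end Meander
/-- the mapping properties of `T^me_a` and `T^br_a` (Remark 9 of the paper). -/
theorem stmt17 (a : ℝ) (ha : 0 < a) (f : ℝ → ℝ) :
    (IsBridge a f →
      IsMeander a (Tme a f) ∧
      (IsBridgeStar a f →
        IsMeanderStar a (Tme a f) ∧
        ((∀ u ∈ Set.Icc 0 a, Tme a f u ≤ Tme a f a) ∧
          ∀ s ∈ Set.Icc 0 a, (∀ u ∈ Set.Icc 0 a, Tme a f u ≤ Tme a f s) → s = a) ∧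
        Tme a f a = 2 * f (rho a f) ∧
        gammaHalf a (Tme a f) = rho a f ∧
        (∀ t ∈ Set.Icc 0 a, Tbr a (Tme a f) t = f t))) ∧
    (IsMeander a f →
      IsBridge a (Tbr a f) ∧
      (IsMeanderStar a f →
        IsBridgeStar a (Tbr a f) ∧
        ((∀ u ∈ Set.Icc 0 a, Tbr a f u ≤ Tbr a f (gammaHalf a f)) ∧
          ∀ s ∈ Set.Icc 0 a, (∀ u ∈ Set.Icc 0 a, Tbr a f u ≤ Tbr a f s) → s = gammaHalf a f) ∧
        Tbr a f (gammaHalf a f) = f a / 2 ∧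
        (∀ t ∈ Set.Icc 0 a, Tme a (Tbr a f) t = f t))) := by
  refine ⟨fun hf => ⟨isMeander_Tme ha.le hf, fun hstar => ?_⟩,
    fun hf => ⟨isBridge_Tbr ha.le hf, fun hstar => ?_⟩⟩
  · have hmax := hstar.isStrictMaxOn_Tme ha
    exact ⟨hstar.isMeanderStar_Tme ha,
      ⟨fun u hu => hmax.le hu, fun s hs hs' => hmax.eq_of_le ⟨ha.le, le_rfl⟩ hs hs'⟩,
      Tme_right ha.le hf, hstar.gammaHalf_Tme ha.le, hstar.Tbr_Tme ha.le⟩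
  · have hmax := hstar.isStrictMaxOn_Tbr ha.le
    have hγ := (hf.gammaHalf_spec ha.le).1
    exact ⟨hstar.isBridgeStar_Tbr ha.le,
      ⟨fun u hu => hmax.le hu, fun s hs hs' => hmax.eq_of_le hγ hs hs'⟩,
      hstar.Tbr_gammaHalf ha.le, hstar.Tme_Tbr ha.le⟩
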